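/- arXiv:0706.3539 — 2 statements merged into one kernel-verified Lean document; each statement's English description precedes it below -/
import Mathlib

section
/- For integers t ≥ 0 and k ≥ 1, one has a(2t+1, k, t) = 2^k · C(t,k) + 2^{k−1} · C(t, k−1). -/
/-- Integer binomial coefficient: `intChoose a b` is zero unless `0 ≤ b ≤ a`. -/
def intChoose (a b : ℤ) : ℤ :=
  if 0 ≤ b ∧ b ≤ a then (a.toNat.choose b.toNat : ℤ) else 0

/-- `a(n,k,t) = ∑_{i=0}^t (-1)^i C(t,i) C(n-2i, k-2i)`. -/
def aFun (n k t : ℕ) : ℤ :=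
  ∑ i ∈ Finset.range (t + 1),
    (-1) ^ i * intChoose t i * intChoose ((n : ℤ) - 2 * i) ((k : ℤ) - 2 * i)

open Polynomial

lemma intChoose_coe (a b : ℕ) : intChoose a b = (a.choose b : ℤ) := by
  unfold intChoose
  split
  · simp
  · next h =>
    rw [not_and_or] at h
    rcases h with h | h
    · exact absurd (Int.ofNat_nonneg b) h
    · rw [Nat.choose_eq_zero_of_lt (by exact_mod_cast lt_of_not_ge h)]
      simp

lemma intChoose_of_neg {a b : ℤ} (hb : b < 0) : intChoose a b = 0 := by
  unfold intChoose
  rw [if_neg]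
  rintro ⟨h0, -⟩
  omega

lemma coeff_pow_one_add_two_X (t k : ℕ) :
    (((1 + 2 * X : ℤ[X]))^t).coeff k = 2 ^ k * (t.choose k : ℤ) := by
  have h : ((1 + 2 * X : ℤ[X]))^t = ((2*X) + 1)^t := by ring
  rw [h, add_pow, finset_sum_coeff]
  have hterm : ∀ i, (((2*X:ℤ[X]))^i * 1^(t-i) * ((t.choose i : ℕ) : ℤ[X])).coeff k
      = if k = i then 2^k * (t.choose k : ℤ) else 0 := by
    intro i
    have h3 : ((2*X:ℤ[X]))^i * 1^(t-i) * ((t.choose i : ℕ) : ℤ[X])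
        = C ((2:ℤ)^i * (t.choose i : ℤ)) * X^i := by
      simp only [map_mul, map_pow, map_natCast, map_ofNat]
      ring
    rw [h3, coeff_C_mul, coeff_X_pow]
    split
    · next hki => subst hki; simp
    · simp
  rw [Finset.sum_congr rfl (fun i _ => hterm i), Finset.sum_ite_eq (Finset.range (t+1)) k]
  split
  · rfl
  · next h =>
    have ht : t < k := by simpa [Nat.lt_succ_iff, not_le] using h
    simp [Nat.choose_eq_zero_of_lt ht]

lemma aFun_eq_coeff (t k : ℕ) :
    aFun (2*t+1) k t = (((1 + X) * (1 + 2 * X)^t : ℤ[X])).coeff k := by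
  have h1 : ((1 + 2 * X : ℤ[X]))^t = ((-(X^2)) + (1+X)^2)^t := by ring
  rw [h1, add_pow, Finset.mul_sum, finset_sum_coeff]
  unfold aFun
  apply Finset.sum_congr rfl
  intro i hi
  have hit : i ≤ t := Nat.lt_succ_iff.mp (Finset.mem_range.mp hi)
  have h2 : (1 + X : ℤ[X]) * ((-(X^2))^i * ((1+X)^2)^(t-i) * ((t.choose i : ℕ) : ℤ[X]))
      = C ((-1)^i * (t.choose i : ℤ)) * ((X+1)^(2*(t-i)+1) * X^(2*i)) := by
    rw [← pow_mul]
    simp only [map_mul, map_pow, map_natCast, map_neg, map_one]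
    ring
  rw [h2, coeff_C_mul, coeff_mul_X_pow', intChoose_coe]
  split
  · next hle =>
    rw [coeff_X_add_one_pow]
    have e1 : ((2*t+1 : ℕ) : ℤ) - 2*(i:ℤ) = ((2*(t-i)+1 : ℕ) : ℤ) := by omega
    have e2 : ((k:ℤ)) - 2*(i:ℤ) = ((k - 2*i : ℕ) : ℤ) := by omega
    rw [e1, e2, intChoose_coe]
    try ring
  · next hle =>
    have hb : (k:ℤ) - 2*(i:ℤ) < 0 := by
      have : k < 2*i := Nat.lt_of_not_le hle
      omega
    rw [intChoose_of_neg hb]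
    try ring

theorem stmt_12 (t k : ℕ) (hk : 1 ≤ k) :
    aFun (2 * t + 1) k t = 2 ^ k * (t.choose k : ℤ) + 2 ^ (k - 1) * (t.choose (k - 1) : ℤ) := by
  rw [aFun_eq_coeff, add_mul, one_mul, coeff_add, coeff_pow_one_add_two_X]
  obtain ⟨m, rfl⟩ : ∃ m, k = m + 1 := ⟨k - 1, by omega⟩
  rw [coeff_X_mul, coeff_pow_one_add_two_X]
  simp
end

section
/- Fix a real constant c > 0. For t ≥ 1 set n = 2t + 2 and k(t) = ⌊c·√n⌋. Then p(n, k(t), t) → exp(−c²/2) as t → ∞. In particular, for n a power of two, p(n, ⌊c·√n⌋, (n−2)/2) does not tend to 1 as n → ∞. -/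
/-- `p(n,k,t) = (∑_{i=0}^t (-1)^i C(t,i) C(n-1-2i, k-2i)) / C(n-1,k)`. -/
def pFun (n k t : ℕ) : ℚ :=
  (∑ i ∈ Finset.range (t + 1),
      (-1) ^ i * (intChoose t i : ℚ) * (intChoose ((n : ℤ) - 1 - 2 * i) ((k : ℤ) - 2 * i) : ℚ))
    / ((n - 1).choose k : ℚ)

/-!
The numerator of `p(2t+2, k, t)` is the coefficient of `x^k` in
`∑ᵢ (-1)^i C(t,i) x^(2i) (1+x)^(2t+1-2i) = (1+x) ((1+x)^2 - x^2)^t = (1+x) (1+2x)^t`,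
that is `2^k C(t,k) + 2^(k-1) C(t,k-1)`. Dividing by `C(2t+1,k)` gives
`p = ∏_{j<k} (2t-2j)/(2t+1-j) · (2t+2-k)/(2t+2-2k)`. Each factor of the product is `1 - y` with
`y = (j+1)/(2t+1-j)`, and `exp (-y/(1-y)) ≤ 1 - y ≤ exp (-y)` squeezes the product between
`exp (-k(k+1)/(2(2t+2-2k)))` and `exp (-k(k+1)/(2(2t+1)))`. For `k ~ c √(2t+2)` both bounds tend
to `exp (-c²/2)`, while the last factor tends to `1`.
-/

open Finset Filter Polynomial Topology Real

lemma intChoose_natCast (a b : ℕ) : intChoose a b = a.choose b := by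
  unfold intChoose
  split_ifs with h
  · simp
  · rw [Nat.choose_eq_zero_of_lt (by omega)]; rfl

lemma intChoose_natCast_sub_eq_coeff (m j k : ℕ) :
    (intChoose m ((k : ℤ) - j) : ℚ) = (X ^ j * (1 + X) ^ m : ℚ[X]).coeff k := by
  rw [coeff_X_pow_mul', coeff_one_add_X_pow]
  split_ifs with hjk
  · rw [show (k : ℤ) - j = ((k - j : ℕ) : ℤ) by omega, intChoose_natCast, Int.cast_natCast]
  · unfold intChoose; rw [if_neg (by omega)]; rfl

lemma coeff_one_add_C_mul_X_pow {R : Type*} [CommSemiring R] (a : R) (n k : ℕ) :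
    ((1 + C a * X) ^ n).coeff k = a ^ k * n.choose k := by
  rw [add_comm, add_pow, finsetSum_coeff, Finset.sum_eq_single k]
  · simp [mul_pow, ← C_pow, -map_pow, ← Nat.cast_comm, coeff_C_mul]
  · intro i _ hik
    simp [mul_pow, ← C_pow, -map_pow, coeff_X_pow, hik.symm, ← Nat.cast_comm, coeff_C_mul]
  · intro hk
    rw [Nat.choose_eq_zero_of_lt (by simpa using hk)]
    simp

lemma one_add_X_mul_one_add_two_X_pow_eq_sum (t : ℕ) :
    (1 + X) * (1 + C 2 * X) ^ t = ∑ i ∈ range (t + 1),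
      C ((-1) ^ i * (t.choose i : ℚ)) * (X ^ (2 * i) * (1 + X) ^ (2 * (t - i) + 1)) := by
  rw [show (1 + C 2 * X : ℚ[X]) = -X ^ 2 + (1 + X) ^ 2 by rw [C_ofNat]; ring, add_pow, mul_sum]
  refine sum_congr rfl fun i _ => ?_
  simp only [map_mul, map_pow, map_neg, map_one, map_natCast, pow_succ _ (2 * _), pow_mul]
  ring

lemma pFun_two_mul_add_two_eq_coeff (t k : ℕ) :
    pFun (2 * t + 2) k t =
      ((1 + X) * (1 + C 2 * X) ^ t : ℚ[X]).coeff k / (2 * t + 1).choose k := by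
  rw [pFun, one_add_X_mul_one_add_two_X_pow_eq_sum, finsetSum_coeff]
  congr 1
  refine sum_congr rfl fun i hi => ?_
  have hit : i ≤ t := Nat.lt_succ_iff.mp (mem_range.mp hi)
  rw [coeff_C_mul, ← intChoose_natCast_sub_eq_coeff, intChoose_natCast, Int.cast_natCast]
  push_cast
  congr 4
  omega

lemma coeff_succ_one_add_X_mul_one_add_two_X_pow (t m : ℕ) :
    ((1 + X) * (1 + C 2 * X) ^ t : ℚ[X]).coeff (m + 1) =
      2 ^ (m + 1) * t.choose (m + 1) + 2 ^ m * t.choose m := by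
  rw [add_mul, one_mul, coeff_add, coeff_X_mul, coeff_one_add_C_mul_X_pow,
    coeff_one_add_C_mul_X_pow]

lemma Nat.cast_choose_succ_mul {R : Type*} [CommRing R] {n k : ℕ} (hk : k ≤ n) :
    (n.choose (k + 1) : R) * (k + 1) = n.choose k * (n - k) := by
  have h := congrArg (Nat.cast : ℕ → R) (Nat.choose_succ_right_eq n k)
  push_cast [Nat.cast_sub hk] at h
  exact h

lemma two_pow_mul_choose_div_choose {t k : ℕ} (hk : k ≤ t) :
    (2 ^ k * t.choose k / (2 * t + 1).choose k : ℝ) =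
      ∏ j ∈ range k, (2 * t - 2 * j) / (2 * t + 1 - j : ℝ) := by
  induction k with
  | zero => simp
  | succ k ih =>
    have hkt : (k : ℝ) < t := by exact_mod_cast hk
    have hpos : (0 : ℝ) < (2 * t + 1).choose k := by exact_mod_cast Nat.choose_pos (by omega)
    have hpos' : (0 : ℝ) < (2 * t + 1).choose (k + 1) := by
      exact_mod_cast Nat.choose_pos (by omega)
    have h1 := Nat.cast_choose_succ_mul (R := ℝ) (n := t) (k := k) (by omega)
    have h2 := Nat.cast_choose_succ_mul (R := ℝ) (n := 2 * t + 1) (k := k) (by omega)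
    push_cast at h2
    rw [prod_range_succ, ← ih (by omega), div_mul_div_comm,
      div_eq_div_iff hpos'.ne' (mul_pos hpos (by linarith)).ne']
    refine mul_right_cancel₀ (b := (k + 1 : ℝ)) (by positivity) ?_
    linear_combination (2 ^ (k + 1) * ((2 * t + 1).choose k : ℝ) * (2 * t + 1 - k)) * h1
      - (2 ^ k * (t.choose k : ℝ) * (2 * t - 2 * k)) * h2

lemma pFun_eq_prod_mul {t k : ℕ} (hk : k ≤ t) :
    (pFun (2 * t + 2) k t : ℝ) =
      (∏ j ∈ range k, (2 * t - 2 * j) / (2 * t + 1 - j : ℝ)) *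
        ((2 * t + 2 - k) / (2 * t + 2 - 2 * k)) := by
  rw [pFun_two_mul_add_two_eq_coeff]
  cases k with
  | zero =>
    have : (2 * t + 2 : ℝ) ≠ 0 := by positivity
    simp [coeff_zero_eq_eval_zero, this]
  | succ m =>
    have hmt : (m : ℝ) < t := by exact_mod_cast hk
    have h := Nat.cast_choose_succ_mul (R := ℝ) (n := t) (k := m) (by omega)
    have hpos : (0 : ℝ) < (2 * t + 1).choose (m + 1) := by
      exact_mod_cast Nat.choose_pos (by omega)
    have hne : (2 * t + 2 - 2 * (m + 1) : ℝ) ≠ 0 := by linarith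
    rw [coeff_succ_one_add_X_mul_one_add_two_X_pow, ← two_pow_mul_choose_div_choose hk]
    push_cast
    rw [div_mul_div_comm, div_eq_div_iff hpos.ne' (mul_ne_zero hpos.ne' hne)]
    linear_combination (-(2 : ℝ) ^ (m + 1) * ((2 * t + 1).choose (m + 1) : ℝ)) * h

lemma exp_neg_div_sub_le_sub_div {x a : ℝ} (ha : 0 < a) (hxa : x < a) :
    exp (-(x / (a - x))) ≤ (a - x) / a := by
  have hax : 0 < a - x := by linarith
  rw [exp_neg, inv_le_comm₀ (exp_pos _) (by positivity), inv_div]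
  calc a / (a - x) = x / (a - x) + 1 := by field_simp; ring
    _ ≤ exp (x / (a - x)) := add_one_le_exp _

lemma prod_range_exp_neg_succ_div (k : ℕ) (a : ℝ) :
    ∏ j ∈ range k, exp (-((j + 1) / a)) = exp (-(k * (k + 1) / (2 * a))) := by
  rw [← exp_sum]
  congr 1
  induction k with
  | zero => simp
  | succ k ih => rw [sum_range_succ, ih]; push_cast; ring

lemma prod_le_exp {t k : ℕ} (hk : k ≤ t) :
    ∏ j ∈ range k, (2 * t - 2 * j) / (2 * t + 1 - j : ℝ) ≤
      exp (-(k * (k + 1) / (2 * (2 * t + 1)))) := by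
  rw [← prod_range_exp_neg_succ_div]
  refine prod_le_prod (fun j hj => ?_) (fun j hj => ?_)
  all_goals have hjt : (j : ℝ) + 1 ≤ t := by exact_mod_cast (mem_range.mp hj).trans_le hk
  · exact div_nonneg (by linarith) (by linarith)
  have hd : (2 * t + 1 - j : ℝ) ≠ 0 := by linarith
  calc (2 * t - 2 * j) / (2 * t + 1 - j : ℝ) = 1 - (j + 1) / (2 * t + 1 - j) := by
        field_simp; ring
    _ ≤ exp (-((j + 1) / (2 * t + 1 - j))) := one_sub_le_exp_neg _
    _ ≤ exp (-((j + 1) / (2 * t + 1))) := by gcongr <;> linarith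

lemma exp_le_prod {t k : ℕ} (hk : k ≤ t) :
    exp (-(k * (k + 1) / (2 * (2 * t + 2 - 2 * k)))) ≤
      ∏ j ∈ range k, (2 * t - 2 * j) / (2 * t + 1 - j : ℝ) := by
  rw [← prod_range_exp_neg_succ_div]
  refine prod_le_prod (fun j _ => (exp_pos _).le) (fun j hj => ?_)
  have hjk : (j : ℝ) + 1 ≤ k := by exact_mod_cast mem_range.mp hj
  have hkt : (k : ℝ) ≤ t := by exact_mod_cast hk
  calc exp (-((j + 1) / (2 * t + 2 - 2 * k))) ≤ exp (-((j + 1) / (2 * t - 2 * j))) :=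
        exp_le_exp.mpr <| neg_le_neg <|
          div_le_div_of_nonneg_left (by linarith) (by linarith) (by linarith)
    _ = exp (-((j + 1) / ((2 * t + 1 - j) - (j + 1)))) := by ring_nf
    _ ≤ ((2 * t + 1 - j) - (j + 1)) / (2 * t + 1 - j) :=
        exp_neg_div_sub_le_sub_div (by linarith) (by linarith)
    _ = (2 * t - 2 * j) / (2 * t + 1 - j) := by ring

section Asymptotics

variable {ι : Type*} {l : Filter ι} {n k : ι → ℝ} {c : ℝ}

lemma tendsto_div_of_tendsto_div_sqrt (hn : Tendsto n l atTop)
    (hk : Tendsto (fun i => k i / √(n i)) l (𝓝 c)) : Tendsto (fun i => k i / n i) l (𝓝 0) := by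
  have h := hk.mul (tendsto_inv_atTop_zero.comp (tendsto_sqrt_atTop.comp hn))
  rw [mul_zero] at h
  refine h.congr' ?_
  filter_upwards [hn.eventually_gt_atTop 0] with i hi
  rw [Function.comp_apply, Function.comp_apply, ← div_eq_mul_inv, div_div, mul_self_sqrt hi.le]

lemma tendsto_sub_div_sub (hn : Tendsto n l atTop)
    (hk : Tendsto (fun i => k i / √(n i)) l (𝓝 c)) (a b : ℝ) :
    Tendsto (fun i => (n i - a * k i) / (n i - b * k i)) l (𝓝 1) := by
  have hw := tendsto_div_of_tendsto_div_sqrt hn hk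
  have h := ((tendsto_const_nhds (x := (1 : ℝ))).sub (hw.const_mul a)).div
    (tendsto_const_nhds.sub (hw.const_mul b)) (by norm_num : (1 : ℝ) - b * 0 ≠ 0)
  simp only [mul_zero, sub_zero, div_one] at h
  refine h.congr' ?_
  filter_upwards [hn.eventually_gt_atTop 0] with i hi
  rw [Pi.div_apply, ← div_div_div_cancel_right₀ hi.ne' (n i - a * k i)]
  congr 1 <;> field_simp

lemma tendsto_mul_add_one_div_sub (hn : Tendsto n l atTop)
    (hk : Tendsto (fun i => k i / √(n i)) l (𝓝 c)) (a b : ℝ) :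
    Tendsto (fun i => k i * (k i + 1) / (2 * (n i - a * k i - b))) l (𝓝 (c ^ 2 / 2)) := by
  have hw := tendsto_div_of_tendsto_div_sqrt hn hk
  have hv := tendsto_inv_atTop_zero.comp hn
  have h := ((hk.pow 2).add hw).div
    (((tendsto_const_nhds.sub (hw.const_mul a)).sub (hv.const_mul b)).const_mul 2)
    (by norm_num : (2 : ℝ) * (1 - a * 0 - b * 0) ≠ 0)
  rw [show (c ^ 2 + 0) / (2 * (1 - a * 0 - b * 0)) = c ^ 2 / 2 by ring] at h
  refine h.congr' ?_
  filter_upwards [hn.eventually_gt_atTop 0] with i hi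
  rw [Pi.div_apply, ← div_div_div_cancel_right₀ hi.ne' (k i * (k i + 1))]
  congr 1
  · rw [div_pow, sq_sqrt hi.le]; ring
  · rw [Function.comp_apply]; field_simp

end Asymptotics

lemma tendsto_two_mul_add_two_atTop : Tendsto (fun t : ℕ => (2 * t + 2 : ℝ)) atTop atTop :=
  tendsto_atTop_add_const_right _ 2 (tendsto_natCast_atTop_atTop.const_mul_atTop two_pos)

lemma eventually_le_of_tendsto_div_sqrt {c : ℝ} {K : ℕ → ℕ}
    (hK : Tendsto (fun t => (K t : ℝ) / √(2 * t + 2)) atTop (𝓝 c)) :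
    ∀ᶠ t in atTop, K t ≤ t := by
  filter_upwards [(tendsto_div_of_tendsto_div_sqrt tendsto_two_mul_add_two_atTop hK)
    |>.eventually_lt_const one_half_pos] with t ht
  rw [div_lt_iff₀ (by positivity)] at ht
  exact Nat.lt_succ_iff.mp (by exact_mod_cast (by linarith : (K t : ℝ) < t + 1))

lemma tendsto_prod_of_tendsto_div_sqrt {c : ℝ} {K : ℕ → ℕ}
    (hK : Tendsto (fun t => (K t : ℝ) / √(2 * t + 2)) atTop (𝓝 c)) :
    Tendsto (fun t => ∏ j ∈ range (K t), (2 * t - 2 * j) / (2 * t + 1 - j : ℝ)) atTop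
      (𝓝 (exp (-(c ^ 2 / 2)))) := by
  have hlim (a b : ℝ) :
      Tendsto (fun t => exp (-(K t * (K t + 1) / (2 * (2 * t + 2 - a * K t - b))))) atTop
        (𝓝 (exp (-(c ^ 2 / 2)))) :=
    (continuous_exp.tendsto _).comp
      (tendsto_mul_add_one_div_sub tendsto_two_mul_add_two_atTop hK a b).neg
  have hlow : Tendsto (fun t => exp (-(K t * (K t + 1) / (2 * (2 * t + 2 - 2 * K t))))) atTop
      (𝓝 (exp (-(c ^ 2 / 2)))) := (hlim 2 0).congr fun t => by ring_nf
  have hup : Tendsto (fun t => exp (-(K t * (K t + 1) / (2 * (2 * t + 1))))) atTop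
      (𝓝 (exp (-(c ^ 2 / 2)))) := (hlim 0 1).congr fun t => by ring_nf
  have hKt := eventually_le_of_tendsto_div_sqrt hK
  exact tendsto_of_tendsto_of_tendsto_of_le_of_le' hlow hup (hKt.mono fun t => exp_le_prod)
    (hKt.mono fun t => prod_le_exp)

theorem stmt_19 (c : ℝ) (hc : 0 < c) :
    Filter.Tendsto
      (fun t : ℕ => ((pFun (2 * t + 2) ⌊c * Real.sqrt (2 * t + 2)⌋₊ t : ℚ) : ℝ))
      Filter.atTop (nhds (Real.exp (-c ^ 2 / 2))) := by
  have hK : Tendsto (fun t : ℕ => (⌊c * √(2 * t + 2)⌋₊ : ℝ) / √(2 * t + 2)) atTop (𝓝 c) :=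
    (tendsto_nat_floor_mul_div_atTop hc.le).comp
      (tendsto_sqrt_atTop.comp tendsto_two_mul_add_two_atTop)
  have h := (tendsto_prod_of_tendsto_div_sqrt hK).mul
    (tendsto_sub_div_sub tendsto_two_mul_add_two_atTop hK 1 2)
  rw [mul_one, ← neg_div] at h
  refine h.congr' ?_
  filter_upwards [eventually_le_of_tendsto_div_sqrt hK] with t ht
  rw [pFun_eq_prod_mul ht, one_mul]
end
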